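/- Let (a_i), (b_i), (a'_i), (b'_i) for i = 1..n be sequences of complex numbers and A, B, ε positive reals with ε < min(1/A, 1/e), Σ_i |a_i|e^{|b_i|} ≤ B, and for all i: 2|a_i|e^{|b_i|+1} ≤ A, |b_i − b'_i| < ε, and |a_i − a'_i| < ε|a_i|. Then ‖Π_{i=1}^n Y(b_i)X(a_i)Y(−b_i) − Π_{i=1}^n Y(b'_i)X(a'_i)Y(−b'_i)‖ ≤ 12·e^{A+2B}·B·ε. -/

import Mathlib

/- STATEMENT 4 (Theorem A.1): Let (a_i), (b_i), (a'_i), (b'_i), i = 1..n, be sequences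
of complex numbers and A, B, ε > 0 with ε < min(1/A, 1/e), Σ|a_i|e^{|b_i|} ≤ B, and
for all i: 2|a_i|e^{|b_i|+1} ≤ A, |b_i − b'_i| < ε, |a_i − a'_i| < ε|a_i|.  Then
‖Π Y(b_i)X(a_i)Y(−b_i) − Π Y(b'_i)X(a'_i)Y(−b'_i)‖ ≤ 12·e^{A+2B}·B·ε, where
X(t) = exp(tX), Y(t) = exp(tY), products over increasing i, operator norm. -/

noncomputable section

/-- The (L²) operator norm of a complex 2×2 matrix. -/
def opNorm (M : Matrix (Fin 2) (Fin 2) ℂ) : ℝ :=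
  ‖Matrix.toEuclideanCLM (𝕜 := ℂ) M‖

def Xm : Matrix (Fin 2) (Fin 2) ℂ := !![1/2, 0; 0, -1/2]
def Ym : Matrix (Fin 2) (Fin 2) ℂ := !![0, 1/2; 1/2, 0]

/-- X(t) = exp(tX). -/
def Xt (t : ℂ) : Matrix (Fin 2) (Fin 2) ℂ := NormedSpace.exp (t • Xm)
/-- Y(t) = exp(tY). -/
def Yt (t : ℂ) : Matrix (Fin 2) (Fin 2) ℂ := NormedSpace.exp (t • Ym)

/-!
Each factor is `Y(b) X(a) Y(-b) = exp (a • conjXm b)` with `conjXm b = Y(b) X Y(-b)`, and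
`‖X‖ = ‖Y‖ = 1/2` because `Xᴴ X = Yᴴ Y = 1/4`. Hence `‖a • conjXm b‖ ≤ |a| e^{|b|} / 2`, and
replacing `(a, b)` by `(a', b')` moves `a • conjXm b` by at most `2 ε |a| e^{|b|}` while keeping its
norm below `(3/2) |a| e^{|b|}`. Telescoping the two products of exponentials, with
`‖exp z - exp z'‖ ≤ ‖z - z'‖ e^{max ‖z‖ ‖z'‖}`, bounds their difference by `e^{3B/2} · 2εB`.
-/

open NormedSpace
open scoped Nat

theorem norm_pow_succ_sub_pow_succ_le {R : Type*} [NormedRing R] {x y : R} {M : ℝ}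
    (hx : ‖x‖ ≤ M) (hy : ‖y‖ ≤ M) (n : ℕ) :
    ‖x ^ (n + 1) - y ^ (n + 1)‖ ≤ (n + 1) * M ^ n * ‖x - y‖ := by
  induction n with
  | zero => simp
  | succ n ih =>
    have hM : 0 ≤ M := (norm_nonneg x).trans hx
    have hxn : ‖x ^ (n + 1)‖ ≤ M ^ (n + 1) :=
      (norm_pow_le' x n.succ_pos).trans (pow_le_pow_left₀ (norm_nonneg x) hx _)
    calc ‖x ^ (n + 2) - y ^ (n + 2)‖
        = ‖x ^ (n + 1) * (x - y) + (x ^ (n + 1) - y ^ (n + 1)) * y‖ := by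
          congr 1; noncomm_ring
      _ ≤ ‖x ^ (n + 1)‖ * ‖x - y‖ + ‖x ^ (n + 1) - y ^ (n + 1)‖ * ‖y‖ :=
          (norm_add_le _ _).trans (add_le_add (norm_mul_le _ _) (norm_mul_le _ _))
      _ ≤ M ^ (n + 1) * ‖x - y‖ + ((n + 1) * M ^ n * ‖x - y‖) * M := by gcongr
      _ = (↑(n + 1) + 1) * M ^ (n + 1) * ‖x - y‖ := by push_cast; ring

section NormedRing

variable {R : Type*} [NormedRing R] [NormOneClass R]

theorem norm_prod_ofFn_le {n : ℕ} (f : Fin n → R) (C : Fin n → ℝ) (hf : ∀ i, ‖f i‖ ≤ C i) :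
    ‖(List.ofFn f).prod‖ ≤ ∏ i, C i :=
  calc ‖(List.ofFn f).prod‖ ≤ ((List.ofFn f).map norm).prod := List.norm_prod_le _
    _ = ∏ i, ‖f i‖ := by rw [List.map_ofFn, List.prod_ofFn]; rfl
    _ ≤ ∏ i, C i := Finset.prod_le_prod (fun i _ => norm_nonneg _) fun i _ => hf i

theorem norm_prod_ofFn_sub_prod_ofFn_le {n : ℕ} (f g : Fin n → R) (C d : Fin n → ℝ)
    (hf : ∀ i, ‖f i‖ ≤ C i) (hg : ∀ i, ‖g i‖ ≤ C i) (hfg : ∀ i, ‖f i - g i‖ ≤ C i * d i) :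
    ‖(List.ofFn f).prod - (List.ofFn g).prod‖ ≤ (∏ i, C i) * ∑ i, d i := by
  induction n with
  | zero => simp
  | succ n ih =>
    simp only [List.ofFn_succ, List.prod_cons, Fin.prod_univ_succ, Fin.sum_univ_succ]
    set P := (List.ofFn fun i => f i.succ).prod
    set Q := (List.ofFn fun i => g i.succ).prod
    have hP : ‖P‖ ≤ ∏ i : Fin n, C i.succ := norm_prod_ofFn_le _ _ fun i => hf i.succ
    have hPQ := ih (fun i => f i.succ) (fun i => g i.succ) (fun i => C i.succ)
      (fun i => d i.succ) (fun i => hf i.succ) (fun i => hg i.succ) fun i => hfg i.succ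
    have hC₀ : 0 ≤ C 0 := (norm_nonneg _).trans (hg 0)
    calc ‖f 0 * P - g 0 * Q‖ = ‖(f 0 - g 0) * P + g 0 * (P - Q)‖ := by congr 1; noncomm_ring
      _ ≤ ‖f 0 - g 0‖ * ‖P‖ + ‖g 0‖ * ‖P - Q‖ :=
          (norm_add_le _ _).trans (add_le_add (norm_mul_le _ _) (norm_mul_le _ _))
      _ ≤ C 0 * d 0 * ∏ i : Fin n, C i.succ
            + C 0 * ((∏ i : Fin n, C i.succ) * ∑ i : Fin n, d i.succ) := by
          gcongr
          · exact (norm_nonneg _).trans (hfg 0)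
          · exact hfg 0
          · exact hg 0
      _ = C 0 * (∏ i : Fin n, C i.succ) * (d 0 + ∑ i : Fin n, d i.succ) := by ring

end NormedRing

section BanachAlgebra

variable {𝔸 : Type*} [NormedRing 𝔸] [CompleteSpace 𝔸]

theorem norm_exp_le_exp_norm (𝕂 : Type*) [RCLike 𝕂] [NormedAlgebra 𝕂 𝔸] [NormOneClass 𝔸]
    (x : 𝔸) : ‖exp x‖ ≤ Real.exp ‖x‖ := by
  refine (exp_series_hasSum_exp' (𝕂 := 𝕂) x).norm_le_of_bounded
    (Real.exp_eq_exp_ℝ ▸ expSeries_div_hasSum_exp ‖x‖) fun n => ?_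
  rw [norm_smul, norm_inv, RCLike.norm_natCast, div_eq_inv_mul]
  gcongr
  exact norm_pow_le _ _

theorem norm_exp_sub_exp_le (𝕂 : Type*) [RCLike 𝕂] [NormedAlgebra 𝕂 𝔸] (x y : 𝔸) :
    ‖exp x - exp y‖ ≤ ‖x - y‖ * Real.exp (max ‖x‖ ‖y‖) := by
  set M := max ‖x‖ ‖y‖
  have hsum : HasSum (fun n : ℕ => ((n + 1)! : 𝕂)⁻¹ • (x ^ (n + 1) - y ^ (n + 1)))
      (exp x - exp y) := by
    have := (exp_series_hasSum_exp' (𝕂 := 𝕂) x).sub (exp_series_hasSum_exp' (𝕂 := 𝕂) y)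
    rw [← hasSum_nat_add_iff' 1] at this
    simpa [smul_sub] using this
  refine hsum.norm_le_of_bounded
    ((Real.exp_eq_exp_ℝ ▸ expSeries_div_hasSum_exp M).mul_left ‖x - y‖) fun n => ?_
  rw [norm_smul, norm_inv, RCLike.norm_natCast]
  calc ((n + 1)! : ℝ)⁻¹ * ‖x ^ (n + 1) - y ^ (n + 1)‖
      ≤ ((n + 1)! : ℝ)⁻¹ * ((n + 1) * M ^ n * ‖x - y‖) := by
        gcongr
        exact norm_pow_succ_sub_pow_succ_le (le_max_left _ _) (le_max_right _ _) n
    _ = ‖x - y‖ * (M ^ n / n !) := by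
        rw [Nat.factorial_succ]; push_cast; field_simp

theorem exp_mul_exp_mul_exp_neg (𝕂 : Type*) [RCLike 𝕂] [NormedAlgebra 𝕂 𝔸] (y z : 𝔸) :
    exp y * exp z * exp (-y) = exp (exp y * z * exp (-y)) := by
  have hball (w : 𝔸) : w ∈ Metric.eball (0 : 𝔸) (expSeries 𝕂 𝔸).radius := by
    simp [expSeries_radius_eq_top]
  let u : 𝔸ˣ := @unitOfInvertible _ _ _ (invertibleExpOfMemBall (hball y))
  exact map_exp_of_mem_ball (MulSemiringAction.toRingHom _ 𝔸 (ConjAct.toConjAct u))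
    (continuous_const_smul (ConjAct.toConjAct u)) z (hball z)

theorem norm_prod_ofFn_exp_sub_prod_ofFn_exp_le (𝕂 : Type*) [RCLike 𝕂] [NormedAlgebra 𝕂 𝔸]
    [NormOneClass 𝔸] {n : ℕ} (z z' : Fin n → 𝔸) (c : Fin n → ℝ)
    (hz : ∀ i, ‖z i‖ ≤ c i) (hz' : ∀ i, ‖z' i‖ ≤ c i) :
    ‖(List.ofFn fun i => exp (z i)).prod - (List.ofFn fun i => exp (z' i)).prod‖ ≤
      Real.exp (∑ i, c i) * ∑ i, ‖z i - z' i‖ := by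
  rw [Real.exp_sum]
  refine norm_prod_ofFn_sub_prod_ofFn_le _ _ _ _
    (fun i => (norm_exp_le_exp_norm 𝕂 _).trans (Real.exp_le_exp.2 (hz i)))
    (fun i => (norm_exp_le_exp_norm 𝕂 _).trans (Real.exp_le_exp.2 (hz' i))) fun i => ?_
  rw [mul_comm]
  exact (norm_exp_sub_exp_le 𝕂 _ _).trans (by gcongr; exact max_le (hz i) (hz' i))

end BanachAlgebra

theorem exp_one_half_le_two : Real.exp (1 / 2) ≤ 2 := by
  refine (pow_le_pow_iff_left₀ (by positivity) (by norm_num) two_ne_zero).1 ?_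
  rw [← Real.exp_nat_mul]
  norm_num
  linarith [Real.exp_one_lt_d9]

theorem exp_max_norm_le_two_mul_exp_norm {E : Type*} [SeminormedAddCommGroup E] {x y : E}
    (h : ‖x - y‖ ≤ 1 / 2) : Real.exp (max ‖x‖ ‖y‖) ≤ 2 * Real.exp ‖x‖ :=
  calc Real.exp (max ‖x‖ ‖y‖) ≤ Real.exp (1 / 2 + ‖x‖) := by
        gcongr
        exact max_le (by linarith) (by linarith [norm_le_norm_add_norm_sub x y])
    _ ≤ 2 * Real.exp ‖x‖ := by
        rw [Real.exp_add]
        gcongr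
        exact exp_one_half_le_two

theorem norm_le_three_halves_mul_norm {E : Type*} [SeminormedAddCommGroup E] {x y : E} {ε : ℝ}
    (hε : ε ≤ 1 / 2) (h : ‖x - y‖ ≤ ε * ‖x‖) : ‖y‖ ≤ 3 / 2 * ‖x‖ := by
  nlinarith [norm_le_norm_add_norm_sub x y, norm_nonneg x]

section Pauli

open scoped Matrix Matrix.Norms.L2Operator

theorem opNorm_eq_norm (M : Matrix (Fin 2) (Fin 2) ℂ) : opNorm M = ‖M‖ := rfl

theorem Matrix.l2_opNorm_eq_of_conjTranspose_mul_self_eq {𝕜 n : Type*} [RCLike 𝕜] [Fintype n]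
    [DecidableEq n] [Nonempty n] {M : Matrix n n 𝕜} {r : ℝ} (hr : 0 ≤ r)
    (h : Mᴴ * M = ((r ^ 2 : ℝ) : 𝕜) • 1) : ‖M‖ = r := by
  refine (mul_self_inj (norm_nonneg M) hr).1 ?_
  rw [← Matrix.l2_opNorm_conjTranspose_mul_self, h, norm_smul, norm_one, mul_one,
    RCLike.norm_ofReal, abs_of_nonneg (by positivity), sq]

theorem norm_Xm : ‖Xm‖ = 1 / 2 :=
  Matrix.l2_opNorm_eq_of_conjTranspose_mul_self_eq (by norm_num) <| by
    ext i j
    fin_cases i <;> fin_cases j <;> simp [Xm, Matrix.mul_apply, map_ofNat] <;> norm_num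

theorem norm_Ym : ‖Ym‖ = 1 / 2 :=
  Matrix.l2_opNorm_eq_of_conjTranspose_mul_self_eq (by norm_num) <| by
    ext i j
    fin_cases i <;> fin_cases j <;> simp [Ym, Matrix.mul_apply, map_ofNat] <;> norm_num

def conjXm (t : ℂ) : Matrix (Fin 2) (Fin 2) ℂ := Yt t * Xm * Yt (-t)

theorem Yt_mul_Xt_mul_Yt_neg (a b : ℂ) : Yt b * Xt a * Yt (-b) = exp (a • conjXm b) := by
  rw [conjXm, Yt, Yt, Xt, neg_smul, exp_mul_exp_mul_exp_neg ℂ, mul_smul_comm, smul_mul_assoc]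

theorem norm_Yt_le (t : ℂ) : ‖Yt t‖ ≤ Real.exp (‖t‖ / 2) :=
  (norm_exp_le_exp_norm ℂ _).trans_eq <| by rw [norm_smul, norm_Ym]; ring_nf

theorem norm_Yt_sub_Yt_le (s t : ℂ) :
    ‖Yt s - Yt t‖ ≤ ‖s - t‖ / 2 * Real.exp (max ‖s‖ ‖t‖ / 2) :=
  (norm_exp_sub_exp_le ℂ _ _).trans_eq <| by
    rw [← sub_smul, norm_smul, norm_smul, norm_smul, norm_Ym,
      ← max_mul_of_nonneg _ _ (by norm_num)]
    ring_nf

theorem norm_conjXm_le (t : ℂ) : ‖conjXm t‖ ≤ Real.exp ‖t‖ / 2 :=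
  calc ‖conjXm t‖ ≤ ‖Yt t‖ * ‖Xm‖ * ‖Yt (-t)‖ := norm_mul₃_le
    _ ≤ Real.exp (‖t‖ / 2) * (1 / 2) * Real.exp (‖t‖ / 2) := by
        gcongr
        · exact norm_Yt_le t
        · exact norm_Xm.le
        · simpa using norm_Yt_le (-t)
    _ = Real.exp ‖t‖ / 2 := by
        rw [mul_right_comm, ← Real.exp_add, add_halves]; ring

theorem norm_conjXm_sub_conjXm_le (s t : ℂ) :
    ‖conjXm s - conjXm t‖ ≤ ‖s - t‖ / 2 * Real.exp (max ‖s‖ ‖t‖) := by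
  set m := max ‖s‖ ‖t‖
  have hs : ‖Yt (-s)‖ ≤ Real.exp (m / 2) :=
    (norm_Yt_le (-s)).trans (by rw [norm_neg]; gcongr; exact le_max_left _ _)
  have ht : ‖Yt t‖ ≤ Real.exp (m / 2) :=
    (norm_Yt_le t).trans (by gcongr; exact le_max_right _ _)
  have hneg : ‖Yt (-s) - Yt (-t)‖ ≤ ‖s - t‖ / 2 * Real.exp (m / 2) := by
    simpa [neg_add_eq_sub, norm_sub_rev t s] using norm_Yt_sub_Yt_le (-s) (-t)
  calc ‖conjXm s - conjXm t‖
      = ‖(Yt s - Yt t) * Xm * Yt (-s) + Yt t * Xm * (Yt (-s) - Yt (-t))‖ := by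
        congr 1; simp only [conjXm]; noncomm_ring
    _ ≤ ‖Yt s - Yt t‖ * ‖Xm‖ * ‖Yt (-s)‖ + ‖Yt t‖ * ‖Xm‖ * ‖Yt (-s) - Yt (-t)‖ :=
        (norm_add_le _ _).trans (add_le_add norm_mul₃_le norm_mul₃_le)
    _ ≤ ‖s - t‖ / 2 * Real.exp (m / 2) * (1 / 2) * Real.exp (m / 2)
          + Real.exp (m / 2) * (1 / 2) * (‖s - t‖ / 2 * Real.exp (m / 2)) := by
        rw [norm_Xm]
        gcongr
        exact norm_Yt_sub_Yt_le s t
    _ = ‖s - t‖ / 2 * Real.exp m := by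
        rw [← add_halves m, Real.exp_add]; ring_nf

section Perturbation

variable {a b a' b' : ℂ} {ε : ℝ}

theorem norm_smul_conjXm_le_of_near (hε : ε ≤ 1 / 2) (hb : ‖b - b'‖ ≤ ε)
    (ha : ‖a - a'‖ ≤ ε * ‖a‖) : ‖a' • conjXm b'‖ ≤ 3 / 2 * (‖a‖ * Real.exp ‖b‖) := by
  have ha' : ‖a'‖ ≤ 3 / 2 * ‖a‖ := norm_le_three_halves_mul_norm hε ha
  have hb' : Real.exp ‖b'‖ ≤ 2 * Real.exp ‖b‖ :=
    (Real.exp_le_exp.2 (le_max_right _ _)).trans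
      (exp_max_norm_le_two_mul_exp_norm (hb.trans hε))
  calc ‖a' • conjXm b'‖ = ‖a'‖ * ‖conjXm b'‖ := norm_smul _ _
    _ ≤ 3 / 2 * ‖a‖ * (2 * Real.exp ‖b‖ / 2) := by
        gcongr
        exact (norm_conjXm_le b').trans (by gcongr)
    _ = 3 / 2 * (‖a‖ * Real.exp ‖b‖) := by ring

theorem norm_smul_conjXm_sub_smul_conjXm_le (hε : ε ≤ 1 / 2) (hb : ‖b - b'‖ ≤ ε)
    (ha : ‖a - a'‖ ≤ ε * ‖a‖) :
    ‖a • conjXm b - a' • conjXm b'‖ ≤ 2 * ε * (‖a‖ * Real.exp ‖b‖) := by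
  have hε₀ : 0 ≤ ε := (norm_nonneg _).trans hb
  have ha' : ‖a'‖ ≤ 3 / 2 * ‖a‖ := norm_le_three_halves_mul_norm hε ha
  calc ‖a • conjXm b - a' • conjXm b'‖
      = ‖(a - a') • conjXm b + a' • (conjXm b - conjXm b')‖ := by
        rw [sub_smul, smul_sub]; abel_nf
    _ ≤ ‖a - a'‖ * ‖conjXm b‖ + ‖a'‖ * ‖conjXm b - conjXm b'‖ :=
        (norm_add_le _ _).trans_eq (by rw [norm_smul, norm_smul])
    _ ≤ ε * ‖a‖ * (Real.exp ‖b‖ / 2) + 3 / 2 * ‖a‖ * (ε / 2 * (2 * Real.exp ‖b‖)) := by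
        gcongr
        · exact norm_conjXm_le b
        · exact (norm_conjXm_sub_conjXm_le b b').trans
            (by gcongr; exact exp_max_norm_le_two_mul_exp_norm (hb.trans hε))
    _ = 2 * ε * (‖a‖ * Real.exp ‖b‖) := by ring

end Perturbation

theorem opNorm_prod_ofFn_sub_prod_ofFn_le {n : ℕ} (a b a' b' : Fin n → ℂ) {ε : ℝ}
    (hε : ε ≤ 1 / 2) (hb : ∀ i, ‖b i - b' i‖ ≤ ε) (ha : ∀ i, ‖a i - a' i‖ ≤ ε * ‖a i‖) :
    opNorm ((List.ofFn fun i => Yt (b i) * Xt (a i) * Yt (-(b i))).prod -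
            (List.ofFn fun i => Yt (b' i) * Xt (a' i) * Yt (-(b' i))).prod) ≤
      Real.exp (3 / 2 * ∑ i, ‖a i‖ * Real.exp ‖b i‖) *
        (2 * ε * ∑ i, ‖a i‖ * Real.exp ‖b i‖) := by
  simp only [opNorm_eq_norm, Yt_mul_Xt_mul_Yt_neg]
  refine (norm_prod_ofFn_exp_sub_prod_ofFn_exp_le ℂ _ _ _ (fun i => ?_)
    fun i => norm_smul_conjXm_le_of_near hε (hb i) (ha i)).trans ?_
  · rw [norm_smul]
    nlinarith [norm_conjXm_le (b i), norm_nonneg (a i), Real.exp_pos ‖b i‖]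
  · rw [← Finset.mul_sum]
    gcongr
    rw [Finset.mul_sum]
    gcongr with i
    exact norm_smul_conjXm_sub_smul_conjXm_le hε (hb i) (ha i)

end Pauli

theorem stmt4_general (n : ℕ) (a b a' b' : Fin n → ℂ) (A B ε : ℝ)
    (hApos : 0 < A) (hεpos : 0 < ε)
    (hε : ε < min (1 / A) (1 / Real.exp 1))
    (hB : ∑ i, ‖a i‖ * Real.exp ‖b i‖ ≤ B)
    (hb : ∀ i, ‖b i - b' i‖ < ε)
    (ha : ∀ i, ‖a i - a' i‖ < ε * ‖a i‖) :
    opNorm ((List.ofFn fun i => Yt (b i) * Xt (a i) * Yt (-(b i))).prod -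
            (List.ofFn fun i => Yt (b' i) * Xt (a' i) * Yt (-(b' i))).prod) ≤
      12 * Real.exp (A + 2 * B) * B * ε := by
  have hε₂ : ε ≤ 1 / 2 := by
    have he : 1 / Real.exp 1 < 1 / 2 :=
      (one_div_lt_one_div (Real.exp_pos 1) two_pos).2 (by linarith [Real.exp_one_gt_d9])
    linarith [hε.trans_le (min_le_right _ _)]
  have hB₀ : 0 ≤ B := (Finset.sum_nonneg fun i _ => by positivity).trans hB
  refine (opNorm_prod_ofFn_sub_prod_ofFn_le a b a' b' hε₂ (fun i => (hb i).le)
    fun i => (ha i).le).trans ?_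
  calc _ ≤ Real.exp (A + 2 * B) * (2 * ε * B) := by gcongr; linarith
    _ ≤ 12 * Real.exp (A + 2 * B) * B * ε := by
        have : 0 ≤ Real.exp (A + 2 * B) * B * ε := by positivity
        linarith

theorem stmt4 (n : ℕ) (a b a' b' : Fin n → ℂ) (A B ε : ℝ)
    (hApos : 0 < A) (hBpos : 0 < B) (hεpos : 0 < ε)
    (hε : ε < min (1 / A) (1 / Real.exp 1))
    (hB : ∑ i, ‖a i‖ * Real.exp ‖b i‖ ≤ B)
    (hA : ∀ i, 2 * ‖a i‖ * Real.exp (‖b i‖ + 1) ≤ A)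
    (hb : ∀ i, ‖b i - b' i‖ < ε)
    (ha : ∀ i, ‖a i - a' i‖ < ε * ‖a i‖) :
    opNorm ((List.ofFn fun i => Yt (b i) * Xt (a i) * Yt (-(b i))).prod -
            (List.ofFn fun i => Yt (b' i) * Xt (a' i) * Yt (-(b' i))).prod) ≤
      12 * Real.exp (A + 2 * B) * B * ε :=
  stmt4_general n a b a' b' A B ε hApos hεpos hε hB hb ha

end
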